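/- Let (fᵢ : Gᵢ → Hᵢ) be a family of group homomorphisms between two inverse sequences of countable groups (Gᵢ, pᵢ) and (Hᵢ, qᵢ), commuting with the bonding maps (fᵢ ∘ pᵢ = qᵢ ∘ fᵢ₊₁ for all i). Then (fᵢ) is a pro-isomorphism if and only if the induced maps lim fᵢ : lim Gᵢ → lim Hᵢ and lim¹ fᵢ : lim¹ Gᵢ → lim¹ Hᵢ (the latter sending the class of (g₀,g₁,…) to the class of (f₀(g₀),f₁(g₁),…)) are both bijections. Here (fᵢ) is called a pro-isomorphism if there exist a strictly increasing function k : ℕ → ℕ and group homomorphisms gᵢ : H_{k(i+1)} → G_{k(i)} such that gᵢ ∘ f_{k(i+1)} : G_{k(i+1)} → G_{k(i)} and f_{k(i)} ∘ gᵢ : H_{k(i+1)} → H_{k(i)} equal the respective composite bonding maps. -/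

import Mathlib

/-- An inverse sequence of groups `⋯ → G₂ → G₁ → G₀`, presented by its compatible
composite bonding homomorphisms `bond h : G j →* G i` for `i ≤ j`; the one-step
bonding maps `pᵢ` are `bond (Nat.le_succ i) : G (i+1) →* G i`. -/
structure GroupInvSeq (G : ℕ → Type) [∀ i, Group (G i)] : Type where
  bond : ∀ ⦃i j : ℕ⦄, i ≤ j → (G j →* G i)
  bond_refl : ∀ i, bond (le_refl i) = MonoidHom.id (G i)
  bond_comp : ∀ ⦃i j k : ℕ⦄ (hij : i ≤ j) (hjk : j ≤ k),
    (bond hij).comp (bond hjk) = bond (hij.trans hjk)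

namespace GroupInvSeq

variable {G H : ℕ → Type} [∀ i, Group (G i)] [∀ i, Group (H i)]

/-- The inverse limit of an inverse sequence of groups: the set of threads. -/
abbrev lim (S : GroupInvSeq G) : Type :=
  {g : ∀ i, G i // ∀ i, S.bond (Nat.le_succ i) (g (i + 1)) = g i}

/-- The orbit relation on `∏ᵢ Gᵢ` of the right action
`(g₀,g₁,…)·(x₀,x₁,…) = (x₀⁻¹g₀p₀(x₁), x₁⁻¹g₁p₁(x₂), …)`; its orbit set is `lim¹`. -/
def lim1Rel (S : GroupInvSeq G) (g g' : ∀ i, G i) : Prop :=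
  ∃ x : ∀ i, G i, ∀ i, g' i = (x i)⁻¹ * g i * S.bond (Nat.le_succ i) (x (i + 1))

/-- The derived limit `lim¹` of an inverse sequence of groups: the orbit set of the
action above, pointed at the class of the identity. -/
def lim1 (S : GroupInvSeq G) : Type :=
  Quot S.lim1Rel

/-- The map `lim Gᵢ → lim Hᵢ` induced by a level map of inverse sequences. -/
def limMap (S : GroupInvSeq G) (T : GroupInvSeq H) (f : ∀ i, G i →* H i)
    (hcomm : ∀ i (x : G (i + 1)),
      f i (S.bond (Nat.le_succ i) x) = T.bond (Nat.le_succ i) (f (i + 1) x)) :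
    S.lim → T.lim :=
  fun g => ⟨fun i => f i (g.1 i), fun i => by
    show T.bond (Nat.le_succ i) (f (i + 1) (g.1 (i + 1))) = f i (g.1 i)
    rw [← g.2 i, hcomm]⟩

/-- The map `lim¹ Gᵢ → lim¹ Hᵢ` induced by a level map of inverse sequences,
sending the class of `(g₀,g₁,…)` to the class of `(f₀(g₀),f₁(g₁),…)`. -/
def lim1Map (S : GroupInvSeq G) (T : GroupInvSeq H) (f : ∀ i, G i →* H i)
    (hcomm : ∀ i (x : G (i + 1)),
      f i (S.bond (Nat.le_succ i) x) = T.bond (Nat.le_succ i) (f (i + 1) x)) :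
    S.lim1 → T.lim1 :=
  Quot.lift (fun g => Quot.mk T.lim1Rel (fun i => f i (g i)))
    (fun g g' hg => by
      obtain ⟨x, hx⟩ := hg
      refine Quot.sound ⟨fun i => f i (x i), fun i => ?_⟩
      show f i (g' i) = (f i (x i))⁻¹ * f i (g i) * T.bond (Nat.le_succ i) (f (i + 1) (x (i + 1)))
      rw [hx i, map_mul, map_mul, map_inv, hcomm])

end GroupInvSeq

/-!
A pro-inverse `(k, g)` of `f` yields explicit inverses of `lim f` and `lim¹ f`. For `lim¹`, replacing
a sequence by its products over the blocks `[k i, k (i + 1))` does not change its class, and on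
block sequences one applies `g` shifted by one block.

Conversely, for towers of countable groups a diagonal argument (Gray) shows: if every sequence is
`lim¹`-equivalent to one with entries in a bond-stable family of subgroups `Mᵢ`, then the sets
`Mᵢ · pʲᵢ(G j)` stabilise in `j`, so every element of the stable set is, up to a factor from `Mᵢ`,
the `i`-th entry of a thread modulo `M`. For the tower of kernels of `f` and `M = 1`, where `lim¹`
vanishes because `lim f` is onto and `lim¹ f` is injective, injectivity of `lim f` then shows that
kernels die under the bonding maps. For `H` and `M = im f`, the bijectivity shows that the bonding
maps of `H` eventually land in `im f`. These two facts produce the maps `gᵢ`.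
-/

namespace StrictMono

variable {k : ℕ → ℕ}

def ceilIdx (hk : StrictMono k) (j : ℕ) : ℕ :=
  Nat.find (⟨j, hk.le_apply⟩ : ∃ i, j ≤ k i)

theorem le_apply_ceilIdx (hk : StrictMono k) (j : ℕ) : j ≤ k (hk.ceilIdx j) :=
  Nat.find_spec (⟨j, hk.le_apply⟩ : ∃ i, j ≤ k i)

theorem ceilIdx_le (hk : StrictMono k) {i j : ℕ} (h : j ≤ k i) : hk.ceilIdx j ≤ i :=
  Nat.find_min' _ h

theorem ceilIdx_apply (hk : StrictMono k) (i : ℕ) : hk.ceilIdx (k i) = i :=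
  le_antisymm (hk.ceilIdx_le le_rfl) (hk.le_iff_le.mp (hk.le_apply_ceilIdx (k i)))

theorem ceilIdx_apply_add_one (hk : StrictMono k) (i : ℕ) : hk.ceilIdx (k i + 1) = i + 1 := by
  refine le_antisymm (hk.ceilIdx_le (hk (Nat.lt_succ_self i))) ?_
  exact Nat.succ_le_of_lt (hk.lt_iff_lt.mp (hk.le_apply_ceilIdx (k i + 1)))

theorem lt_apply_ceilIdx (hk : StrictMono k) {j : ℕ} (h : ¬∃ i, k i = j) :
    j < k (hk.ceilIdx j) :=
  (hk.le_apply_ceilIdx j).lt_of_ne fun e => h ⟨_, e.symm⟩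

theorem ceilIdx_add_one (hk : StrictMono k) {j : ℕ} (h : ¬∃ i, k i = j) :
    hk.ceilIdx (j + 1) = hk.ceilIdx j :=
  le_antisymm (hk.ceilIdx_le (hk.lt_apply_ceilIdx h))
    (hk.ceilIdx_le ((Nat.le_succ j).trans (hk.le_apply_ceilIdx (j + 1))))

end StrictMono

namespace GroupInvSeq

variable {G H : ℕ → Type} [∀ i, Group (G i)] [∀ i, Group (H i)]

section Basic

variable (A : GroupInvSeq G)

@[simp]
theorem bond_self {i : ℕ} (h : i ≤ i) (x : G i) : A.bond h x = x :=
  DFunLike.congr_fun (A.bond_refl i) x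

theorem bond_bond {i j l : ℕ} (hij : i ≤ j) (hjl : j ≤ l) (x : G l) :
    A.bond hij (A.bond hjl x) = A.bond (hij.trans hjl) x :=
  DFunLike.congr_fun (A.bond_comp hij hjl) x

theorem bond_congr {ι : ℕ → ℕ} (y : ∀ n, G (ι n)) {j n m : ℕ} (e : n = m) (hn : j ≤ ι n)
    (hm : j ≤ ι m) : A.bond hn (y n) = A.bond hm (y m) := by
  subst e; rfl

theorem bond_apply_lim (a : A.lim) {i j : ℕ} (h : i ≤ j) : A.bond h (a.1 j) = a.1 i := by
  induction j, h using Nat.le_induction with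
  | base => exact A.bond_self _ _
  | succ j hij ih => rw [← A.bond_bond hij (Nat.le_succ j), a.2 j, ih]

theorem lim1Rel_refl (g : ∀ i, G i) : A.lim1Rel g g :=
  ⟨1, fun i => by simp⟩

theorem lim1Rel_symm {g g' : ∀ i, G i} : A.lim1Rel g g' → A.lim1Rel g' g := by
  rintro ⟨x, hx⟩
  refine ⟨x⁻¹, fun i => ?_⟩
  simp only [hx i, Pi.inv_apply, map_inv]
  group

theorem lim1Rel_trans {g g' g'' : ∀ i, G i} :
    A.lim1Rel g g' → A.lim1Rel g' g'' → A.lim1Rel g g'' := by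
  rintro ⟨x, hx⟩ ⟨y, hy⟩
  refine ⟨x * y, fun i => ?_⟩
  simp only [hy i, hx i, Pi.mul_apply, map_mul]
  group

theorem lim1_mk_eq_mk_iff {g g' : ∀ i, G i} :
    Quot.mk A.lim1Rel g = Quot.mk A.lim1Rel g' ↔ A.lim1Rel g g' :=
  Quot.eq.trans (Equivalence.eqvGen_iff ⟨A.lim1Rel_refl, A.lim1Rel_symm, A.lim1Rel_trans⟩)

theorem lim1Rel_one_iff {g : ∀ i, G i} :
    A.lim1Rel g 1 ↔ ∃ x : ∀ i, G i, ∀ i, x i = g i * A.bond (Nat.le_succ i) (x (i + 1)) := by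
  simp only [lim1Rel, Pi.one_apply, mul_assoc, eq_comm (a := (1 : G _)), inv_mul_eq_one]

def BondStable (M : ∀ i, Subgroup (G i)) : Prop :=
  ∀ ⦃i j : ℕ⦄ (h : i ≤ j) (x : G j), x ∈ M j → A.bond h x ∈ M i

def Lim1RepresentedIn (M : ∀ i, Subgroup (G i)) : Prop :=
  ∀ g : ∀ i, G i, ∃ g', (∀ i, g' i ∈ M i) ∧ A.lim1Rel g g'

end Basic

theorem map_bond (S : GroupInvSeq G) (T : GroupInvSeq H) {f : ∀ i, G i →* H i}
    (hcomm : ∀ i (x : G (i + 1)),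
      f i (S.bond (Nat.le_succ i) x) = T.bond (Nat.le_succ i) (f (i + 1) x))
    {i j : ℕ} (h : i ≤ j) (x : G j) : f i (S.bond h x) = T.bond h (f j x) := by
  induction j, h using Nat.le_induction with
  | base => rw [S.bond_self, T.bond_self]
  | succ j hij ih => rw [← S.bond_bond hij (Nat.le_succ j), ih, hcomm, T.bond_bond]

section PartialProd

variable (A : GroupInvSeq G)

/-- `partialProd g i j = gᵢ · pᵢ(gᵢ₊₁) ⋯ p(g_{j-1})` in `G i`, and `1` when `j ≤ i`. -/
def partialProd (g : ∀ i, G i) (i : ℕ) : ℕ → G i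
  | 0 => 1
  | j + 1 => if h : i ≤ j then partialProd g i j * A.bond h (g j) else 1

theorem partialProd_succ (g : ∀ i, G i) {i j : ℕ} (h : i ≤ j) :
    A.partialProd g i (j + 1) = A.partialProd g i j * A.bond h (g j) := by
  rw [partialProd, dif_pos h]

theorem partialProd_of_le (g : ∀ i, G i) {i j : ℕ} (h : j ≤ i) : A.partialProd g i j = 1 := by
  cases j with
  | zero => rfl
  | succ j => rw [partialProd, dif_neg (by omega)]

@[simp]
theorem partialProd_self (g : ∀ i, G i) (i : ℕ) : A.partialProd g i i = 1 :=
  A.partialProd_of_le g le_rfl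

theorem partialProd_succ_self (g : ∀ i, G i) (i : ℕ) : A.partialProd g i (i + 1) = g i := by
  rw [A.partialProd_succ g le_rfl, partialProd_self, one_mul, bond_self]

theorem partialProd_trans (g : ∀ i, G i) {i j l : ℕ} (hij : i ≤ j) (hjl : j ≤ l) :
    A.partialProd g i l = A.partialProd g i j * A.bond hij (A.partialProd g j l) := by
  induction l, hjl using Nat.le_induction with
  | base => rw [partialProd_self, map_one, mul_one]
  | succ l hjl ih =>
    rw [A.partialProd_succ g (hij.trans hjl), A.partialProd_succ g hjl, ih, map_mul, mul_assoc,
      A.bond_bond]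

theorem partialProd_eq_one (g : ∀ i, G i) {i j : ℕ} (h : ∀ l, i ≤ l → l < j → g l = 1) :
    A.partialProd g i j = 1 := by
  induction j with
  | zero => rfl
  | succ j ih =>
    by_cases hij : i ≤ j
    · rw [A.partialProd_succ _ hij, ih fun l hl hl' => h l hl (by omega), h j hij (by omega),
        map_one, one_mul]
    · exact A.partialProd_of_le g (by omega)

theorem partialProd_eq_of_eq_one (g : ∀ i, G i) {i j : ℕ} (hij : i < j)
    (h : ∀ l, i < l → l < j → g l = 1) : A.partialProd g i j = g i := by
  rw [A.partialProd_trans g (Nat.le_succ i) hij, partialProd_succ_self,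
    A.partialProd_eq_one g h, map_one, mul_one]

theorem partialProd_lim1Rel {g g' x : ∀ i, G i}
    (hx : ∀ i, g' i = (x i)⁻¹ * g i * A.bond (Nat.le_succ i) (x (i + 1))) {i j : ℕ} (h : i ≤ j) :
    A.partialProd g' i j = (x i)⁻¹ * A.partialProd g i j * A.bond h (x j) := by
  induction j, h using Nat.le_induction with
  | base => simp
  | succ j hij ih =>
    rw [A.partialProd_succ g' hij, A.partialProd_succ g hij, ih, hx j, map_mul, map_mul, map_inv,
      A.bond_bond]
    group

theorem partialProd_mem {M : ∀ i, Subgroup (G i)} (hM : A.BondStable M)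
    {g : ∀ i, G i} (hg : ∀ i, g i ∈ M i) (i j : ℕ) : A.partialProd g i j ∈ M i := by
  induction j with
  | zero => exact one_mem _
  | succ j ih =>
    by_cases hij : i ≤ j
    · rw [A.partialProd_succ _ hij]; exact mul_mem ih (hM hij _ (hg j))
    · rw [A.partialProd_of_le g (by omega)]; exact one_mem _

end PartialProd

theorem map_partialProd (S : GroupInvSeq G) (T : GroupInvSeq H) {f : ∀ i, G i →* H i}
    (hcomm : ∀ i (x : G (i + 1)),
      f i (S.bond (Nat.le_succ i) x) = T.bond (Nat.le_succ i) (f (i + 1) x))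
    (g : ∀ i, G i) (i j : ℕ) :
    f i (S.partialProd g i j) = T.partialProd (fun l => f l (g l)) i j := by
  induction j with
  | zero => exact map_one _
  | succ j ih =>
    by_cases hij : i ≤ j
    · rw [S.partialProd_succ _ hij, T.partialProd_succ _ hij, map_mul, ih, map_bond S T hcomm]
    · rw [S.partialProd_of_le _ (by omega), T.partialProd_of_le _ (by omega), map_one]

section Subsequence

variable (A : GroupInvSeq G) {k : ℕ → ℕ}

def reindex (hk : StrictMono k) : GroupInvSeq (fun i => G (k i)) where
  bond _ _ hij := A.bond (hk.monotone hij)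
  bond_refl i := A.bond_refl (k i)
  bond_comp _ _ _ hij hjk := A.bond_comp (hk.monotone hij) (hk.monotone hjk)

open Classical in
/-- Extends a sequence indexed by the subsequence `k` to all indices by `1`. -/
noncomputable def spread (k : ℕ → ℕ) (c : ∀ i, G (k i)) (j : ℕ) : G j :=
  if h : ∃ i, k i = j then h.choose_spec ▸ c h.choose else 1

theorem spread_apply (hk : StrictMono k) (c : ∀ i, G (k i)) (i : ℕ) : spread k c (k i) = c i := by
  have h : ∃ i', k i' = k i := ⟨i, rfl⟩
  have cast_eq : ∀ (i' : ℕ) (e : k i' = k i), i' = i → (e ▸ c i' : G (k i)) = c i := by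
    rintro _ _ rfl; rfl
  rw [spread, dif_pos h]
  exact cast_eq _ h.choose_spec (hk.injective h.choose_spec)

theorem spread_of_not_mem (c : ∀ i, G (k i)) {j : ℕ} (h : ¬∃ i, k i = j) : spread k c j = 1 := by
  rw [spread, dif_neg h]

theorem map_spread (hk : StrictMono k) (f : ∀ i, G i →* H i) (c : ∀ i, G (k i)) :
    (fun j => f j (spread k c j)) = spread k (fun i => f (k i) (c i)) := by
  funext j
  by_cases hj : ∃ i, k i = j
  · obtain ⟨i, rfl⟩ := hj
    rw [spread_apply hk, spread_apply hk]
  · rw [spread_of_not_mem _ hj, spread_of_not_mem _ hj, map_one]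

def blockProd (k : ℕ → ℕ) (g : ∀ i, G i) (i : ℕ) : G (k i) :=
  A.partialProd g (k i) (k (i + 1))

theorem blockProd_spread (hk : StrictMono k) (c : ∀ i, G (k i)) :
    A.blockProd k (spread k c) = c := by
  funext i
  refine (A.partialProd_eq_of_eq_one _ (hk (Nat.lt_succ_self i)) fun l h1 h2 => ?_).trans
    (spread_apply hk c i)
  refine spread_of_not_mem _ ?_
  rintro ⟨i', rfl⟩
  have := hk.lt_iff_lt.mp h1
  have := hk.lt_iff_lt.mp h2
  omega

theorem lim1Rel.blockProd {A : GroupInvSeq G} (hk : StrictMono k) {g g' : ∀ i, G i} (h : A.lim1Rel g g') :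
    (A.reindex hk).lim1Rel (A.blockProd k g) (A.blockProd k g') := by
  obtain ⟨x, hx⟩ := h
  exact ⟨fun i => x (k i), fun i => A.partialProd_lim1Rel hx (hk.monotone (Nat.le_succ i))⟩

theorem lim1Rel.spread {A : GroupInvSeq G} (hk : StrictMono k) {c c' : ∀ i, G (k i)}
    (h : (A.reindex hk).lim1Rel c c') : A.lim1Rel (spread k c) (spread k c') := by
  obtain ⟨y, hy⟩ := h
  refine ⟨fun j => A.bond (hk.le_apply_ceilIdx j) (y (hk.ceilIdx j)), fun j => ?_⟩
  beta_reduce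
  by_cases hj : ∃ i, k i = j
  · obtain ⟨i, rfl⟩ := hj
    rw [spread_apply hk c', spread_apply hk c, hy i,
      A.bond_congr y (hk.ceilIdx_apply i) _ le_rfl,
      A.bond_congr y (hk.ceilIdx_apply_add_one i) _ (hk (Nat.lt_succ_self i)),
      A.bond_self, A.bond_bond]
    rfl
  · rw [spread_of_not_mem c hj, spread_of_not_mem c' hj, A.bond_bond,
      A.bond_congr y (hk.ceilIdx_add_one hj) _ (hk.le_apply_ceilIdx j), mul_one, inv_mul_cancel]

theorem lim1Rel_spread_blockProd (hk : StrictMono k) (g : ∀ i, G i) :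
    A.lim1Rel g (spread k (A.blockProd k g)) := by
  refine ⟨fun j => A.partialProd g j (k (hk.ceilIdx j)), fun j => ?_⟩
  beta_reduce
  by_cases hj : ∃ i, k i = j
  · obtain ⟨i, rfl⟩ := hj
    rw [spread_apply hk, hk.ceilIdx_apply, hk.ceilIdx_apply_add_one, partialProd_self, inv_one,
      one_mul, blockProd, A.partialProd_trans g (Nat.le_succ (k i)) (hk (Nat.lt_succ_self i)),
      A.partialProd_succ_self]
  · rw [spread_of_not_mem _ hj, hk.ceilIdx_add_one hj,
      A.partialProd_trans g (Nat.le_succ j) (hk.lt_apply_ceilIdx hj), A.partialProd_succ_self]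
    group

theorem lim1Rel_spread_shift_blockProd (hk : StrictMono k) (g : ∀ i, G i) :
    A.lim1Rel g
      (spread k fun i => A.bond (hk.monotone (Nat.le_succ i)) (A.blockProd k g (i + 1))) :=
  A.lim1Rel_trans (A.lim1Rel_spread_blockProd hk g)
    (lim1Rel.spread hk ⟨A.blockProd k g, fun i => by rw [inv_mul_cancel, one_mul]; rfl⟩)

end Subsequence

structure ProInverse (S : GroupInvSeq G) (T : GroupInvSeq H) (f : ∀ i, G i →* H i) where
  k : ℕ → ℕ
  strictMono : StrictMono k
  inv : ∀ i, H (k (i + 1)) →* G (k i)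
  inv_comp : ∀ i, (inv i).comp (f (k (i + 1))) = S.bond (strictMono.monotone (Nat.le_succ i))
  comp_inv : ∀ i, (f (k i)).comp (inv i) = T.bond (strictMono.monotone (Nat.le_succ i))

namespace ProInverse

variable {S : GroupInvSeq G} {T : GroupInvSeq H} {f : ∀ i, G i →* H i} (e : ProInverse S T f)

theorem inv_comp_apply (i : ℕ) (x : G (e.k (i + 1))) :
    e.inv i (f _ x) = S.bond (e.strictMono.monotone (Nat.le_succ i)) x :=
  DFunLike.congr_fun (e.inv_comp i) x

theorem comp_inv_apply (i : ℕ) (y : H (e.k (i + 1))) :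
    f _ (e.inv i y) = T.bond (e.strictMono.monotone (Nat.le_succ i)) y :=
  DFunLike.congr_fun (e.comp_inv i) y

theorem inv_bond (i : ℕ) (y : H (e.k (i + 2))) :
    e.inv i (T.bond (e.strictMono.monotone (Nat.le_succ (i + 1))) y) =
      S.bond (e.strictMono.monotone (Nat.le_succ i)) (e.inv (i + 1) y) := by
  rw [← e.comp_inv_apply, e.inv_comp_apply]

def limInv (a : T.lim) : S.lim :=
  ⟨fun j => S.bond e.strictMono.le_apply (e.inv j (a.1 (e.k (j + 1)))), fun j => by
    rw [S.bond_bond, ← S.bond_bond e.strictMono.le_apply (e.strictMono.monotone (Nat.le_succ j)),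
      ← e.inv_bond, T.bond_apply_lim]⟩

variable (hcomm : ∀ i (x : G (i + 1)),
  f i (S.bond (Nat.le_succ i) x) = T.bond (Nat.le_succ i) (f (i + 1) x))
include hcomm

theorem limInv_limMap (a : S.lim) : e.limInv (limMap S T f hcomm a) = a := by
  refine Subtype.ext (funext fun j => ?_)
  change S.bond _ (e.inv j (f _ (a.1 (e.k (j + 1))))) = a.1 j
  rw [e.inv_comp_apply, S.bond_bond, S.bond_apply_lim]

theorem limMap_limInv (a : T.lim) : limMap S T f hcomm (e.limInv a) = a := by
  refine Subtype.ext (funext fun j => ?_)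
  change f j (S.bond _ (e.inv j (a.1 (e.k (j + 1))))) = a.1 j
  rw [map_bond S T hcomm, e.comp_inv_apply, T.bond_bond, T.bond_apply_lim]

theorem bijective_limMap (e : ProInverse S T f) : Function.Bijective (limMap S T f hcomm) :=
  Function.bijective_iff_has_inverse.mpr
    ⟨e.limInv, e.limInv_limMap hcomm, e.limMap_limInv hcomm⟩

omit hcomm

theorem lim1Rel_inv_shift {c c' : ∀ i, H (e.k i)} (h : (T.reindex e.strictMono).lim1Rel c c') :
    (S.reindex e.strictMono).lim1Rel (fun i => e.inv i (c (i + 1)))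
      (fun i => e.inv i (c' (i + 1))) := by
  obtain ⟨y, hy⟩ := h
  refine ⟨fun i => e.inv i (y (i + 1)), fun i => ?_⟩
  beta_reduce
  rw [hy (i + 1), map_mul, map_mul, map_inv]
  exact congrArg _ (e.inv_bond i (y (i + 2)))

noncomputable def lim1Inv : T.lim1 → S.lim1 :=
  Quot.lift (fun h => Quot.mk _ (spread e.k fun i => e.inv i (T.blockProd e.k h (i + 1))))
    fun _ _ hrel => Quot.sound <|
      (e.lim1Rel_inv_shift (hrel.blockProd e.strictMono)).spread e.strictMono

include hcomm

theorem lim1Inv_lim1Map (a : S.lim1) : e.lim1Inv (lim1Map S T f hcomm a) = a := by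
  induction a using Quot.ind with
  | mk a =>
  change Quot.mk _ (spread e.k fun i => e.inv i (T.blockProd e.k (fun j => f j (a j)) (i + 1))) =
    Quot.mk _ a
  simp only [blockProd, ← map_partialProd S T hcomm, e.inv_comp_apply]
  exact S.lim1_mk_eq_mk_iff.mpr (S.lim1Rel_symm (S.lim1Rel_spread_shift_blockProd e.strictMono a))

theorem lim1Map_lim1Inv (h : T.lim1) : lim1Map S T f hcomm (e.lim1Inv h) = h := by
  induction h using Quot.ind with
  | mk h =>
  change Quot.mk _ (fun j => f j (spread e.k (fun i => e.inv i (T.blockProd e.k h (i + 1))) j)) =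
    Quot.mk _ h
  simp only [map_spread e.strictMono, e.comp_inv_apply]
  exact T.lim1_mk_eq_mk_iff.mpr (T.lim1Rel_symm (T.lim1Rel_spread_shift_blockProd e.strictMono h))

theorem bijective_lim1Map (e : ProInverse S T f) : Function.Bijective (lim1Map S T f hcomm) :=
  Function.bijective_iff_has_inverse.mpr
    ⟨e.lim1Inv, e.lim1Inv_lim1Map hcomm, e.lim1Map_lim1Inv hcomm⟩

end ProInverse

section RelImage

variable (A : GroupInvSeq G) (M : ∀ i, Subgroup (G i))

/-- The set `Mᵢ · pʲᵢ(G j)`; it is empty when `j < i`. -/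
def relImage (i j : ℕ) : Set (G i) :=
  {u | ∃ h : i ≤ j, ∃ m ∈ M i, ∃ z : G j, m * A.bond h z = u}

def IsThreadModulo (t : ∀ i, G i) : Prop :=
  ∀ i, ∃ μ ∈ M i, A.bond (Nat.le_succ i) (t (i + 1)) = μ * t i

variable {A M}

theorem bond_mem_relImage {i j : ℕ} (h : i ≤ j) (z : G j) : A.bond h z ∈ A.relImage M i j :=
  ⟨h, 1, one_mem _, z, one_mul _⟩

theorem mul_mem_relImage {i j : ℕ} {m u : G i} (hm : m ∈ M i) (hu : u ∈ A.relImage M i j) :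
    m * u ∈ A.relImage M i j := by
  obtain ⟨h, m', hm', z, rfl⟩ := hu
  exact ⟨h, m * m', mul_mem hm hm', z, mul_assoc _ _ _⟩

theorem relImage_anti {i j l : ℕ} (hij : i ≤ j) (hjl : j ≤ l) :
    A.relImage M i l ⊆ A.relImage M i j := by
  rintro _ ⟨-, m, hm, z, rfl⟩
  exact ⟨hij, m, hm, A.bond hjl z, by rw [A.bond_bond]⟩

theorem relImage_subset_of_forall_mul_bond_mem {i j l : ℕ} (hij : i ≤ j) (hjl : j ≤ l) {u : G i}
    (hu : ∀ w : G j, u * A.bond hij w ∈ A.relImage M i l) :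
    A.relImage M i j ⊆ A.relImage M i l := by
  obtain ⟨_, m', hm', z', hz'⟩ := relImage_anti hij hjl (by simpa using hu 1)
  rintro _ ⟨-, m, hm, ζ, rfl⟩
  have key : m * A.bond hij ζ = m * m'⁻¹ * (u * A.bond hij (z'⁻¹ * ζ)) := by
    rw [← hz', map_mul, map_inv]
    group
  rw [key]
  exact mul_mem_relImage (mul_mem hm (inv_mem hm')) (hu _)

/-- Gray's diagonal argument: enumerate `G i` as `y₀, y₁, …` and build `g` block by block, the
`n`-th block defeating `yₙ`. -/
theorem exists_forall_inv_mul_partialProd_not_mem {i : ℕ} [Countable (G i)]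
    (hesc : ∀ j (hij : i ≤ j) (u : G i), ∃ w : G j, ∃ l, j < l ∧
      u * A.bond hij w ∉ A.relImage M i l) :
    ∃ g : ∀ i, G i, ∀ t : G i, ∃ j, i ≤ j ∧ t⁻¹ * A.partialProd g i j ∉ A.relImage M i j := by
  obtain ⟨y, hy⟩ := exists_surjective_nat (G i)
  choose w l hl hw using fun n (s : {p : ℕ × G i // i ≤ p.1}) => hesc s.1.1 s.2 ((y n)⁻¹ * s.1.2)
  let st : ℕ → {p : ℕ × G i // i ≤ p.1} := fun n => Nat.rec ⟨(i, 1), le_rfl⟩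
    (fun n s => ⟨(l n s, s.1.2 * A.bond s.2 (w n s)), s.2.trans (hl n s).le⟩) n
  have hk : StrictMono fun n => (st n).1.1 := strictMono_nat_of_lt_succ fun n => hl n (st n)
  let c : ∀ n, G (st n).1.1 := fun n => w n (st n)
  have hprod : ∀ n, A.partialProd (spread _ c) i (st n).1.1 = (st n).1.2 := by
    intro n
    induction n with
    | zero => exact A.partialProd_self _ i
    | succ n ih =>
      have hblock := congrFun (A.blockProd_spread hk c) n
      rw [blockProd] at hblock
      rw [A.partialProd_trans _ (st n).2 (hk (Nat.lt_succ_self n)).le, ih, hblock]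
  refine ⟨spread _ c, fun t => ?_⟩
  obtain ⟨n, rfl⟩ := hy t
  refine ⟨(st (n + 1)).1.1, (st (n + 1)).2, ?_⟩
  rw [hprod (n + 1), ← mul_assoc]
  exact hw n (st n)

/-- For `M = 1` this is the Mittag-Leffler condition. -/
theorem exists_relImage_subset [∀ i, Countable (G i)] (hM : A.BondStable M)
    (hred : A.Lim1RepresentedIn M) (i : ℕ) :
    ∃ j, i ≤ j ∧ ∀ l, j ≤ l → A.relImage M i j ⊆ A.relImage M i l := by
  by_contra! hcon
  obtain ⟨g, hg⟩ := exists_forall_inv_mul_partialProd_not_mem (A := A) (M := M) fun j hij u => by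
    obtain ⟨l, hjl, hns⟩ := hcon j hij
    rcases hjl.eq_or_lt with rfl | hlt
    · exact absurd subset_rfl hns
    by_contra! hall
    exact hns (relImage_subset_of_forall_mul_bond_mem hij hjl fun w => hall w l hlt)
  obtain ⟨g', hg'M, x, hx⟩ := hred g
  obtain ⟨j, hij, hj⟩ := hg (x i)
  refine hj ⟨hij, A.partialProd g' i j, A.partialProd_mem hM hg'M i j, (x j)⁻¹, ?_⟩
  rw [A.partialProd_lim1Rel hx hij, map_inv]
  group

end RelImage

section ThreadModulo

variable {A : GroupInvSeq G} {M : ∀ i, Subgroup (G i)}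

theorem exists_isThreadModulo_of_step (hM : A.BondStable M) (E : ∀ i, Set (G i))
    (hstep : ∀ i, ∀ v ∈ E i, ∃ v' ∈ E (i + 1), ∃ μ ∈ M i, A.bond (Nat.le_succ i) v' = μ * v)
    {i₀ : ℕ} {z₀ : G i₀} (hz₀ : z₀ ∈ E i₀) :
    ∃ t, A.IsThreadModulo M t ∧ ∃ m ∈ M i₀, t i₀ = m * z₀ := by
  choose next hnext μ hμ hbond using hstep
  let W : ∀ r, E (i₀ + r) := fun r =>
    Nat.rec ⟨z₀, hz₀⟩ (fun r v => ⟨next _ v.1 v.2, hnext _ v.1 v.2⟩) r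
  have hW : ∀ r, A.bond (Nat.le_succ _) (W (r + 1)).1 = μ _ (W r).1 (W r).2 * (W r).1 :=
    fun r => hbond _ _ _
  have hdown : ∀ r, ∃ m ∈ M i₀, A.bond (Nat.le_add_right i₀ r) (W r).1 = m * z₀ := by
    intro r
    induction r with
    | zero => exact ⟨1, one_mem _, (A.bond_self _ z₀).trans (one_mul z₀).symm⟩
    | succ r ih =>
      obtain ⟨m, hm, hmz⟩ := ih
      refine ⟨A.bond (Nat.le_add_right i₀ r) (μ _ (W r).1 (W r).2) * m,
        mul_mem (hM _ _ (hμ _ _ _)) hm, ?_⟩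
      rw [← A.bond_bond (Nat.le_add_right i₀ r) (Nat.le_succ _), hW, map_mul, hmz, mul_assoc]
  refine ⟨fun j => A.bond (Nat.le_add_left j i₀) (W j).1, fun j => ⟨_,
    hM (Nat.le_add_left j i₀) _ (hμ _ (W j).1 (W j).2), ?_⟩, hdown i₀⟩
  rw [A.bond_bond, ← A.bond_bond (Nat.le_add_left j i₀) (Nat.le_succ _), hW, map_mul]

theorem exists_isThreadModulo [∀ i, Countable (G i)] (hM : A.BondStable M)
    (hred : A.Lim1RepresentedIn M) (i₀ : ℕ) :
    ∃ j, ∃ h : i₀ ≤ j, ∀ z : G j, ∃ t, A.IsThreadModulo M t ∧ ∃ m ∈ M i₀, t i₀ = m * A.bond h z := by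
  choose σ hσ hstab using exists_relImage_subset hM hred
  refine ⟨σ i₀, hσ i₀, fun z =>
    exists_isThreadModulo_of_step hM (fun i => A.relImage M i (σ i)) ?_ (bond_mem_relImage _ z)⟩
  rintro i _ ⟨_, m, hm, z', rfl⟩
  have hl := le_max_right (σ i) (σ (i + 1))
  obtain ⟨_, m₂, hm₂, z₂, hz₂⟩ := hstab i _ (le_max_left _ (σ (i + 1))) (bond_mem_relImage _ z')
  refine ⟨A.bond ((hσ (i + 1)).trans hl) z₂, ?_, (m * m₂)⁻¹, inv_mem (mul_mem hm hm₂), ?_⟩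
  · rw [← A.bond_bond (hσ (i + 1)) hl]
    exact bond_mem_relImage _ _
  · rw [A.bond_bond, ← hz₂]
    group

end ThreadModulo

section Backward

variable (S : GroupInvSeq G) (T : GroupInvSeq H) {f : ∀ i, G i →* H i}
  (hcomm : ∀ i (x : G (i + 1)),
    f i (S.bond (Nat.le_succ i) x) = T.bond (Nat.le_succ i) (f (i + 1) x))

def kerSeq : GroupInvSeq fun i => (f i).ker where
  bond i j h := ((S.bond h).comp (f j).ker.subtype).codRestrict (f i).ker fun x => by
    rw [MonoidHom.mem_ker, MonoidHom.comp_apply, map_bond S T hcomm, Subgroup.coe_subtype,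
      x.2, map_one]
  bond_refl i := MonoidHom.ext fun x => Subtype.ext (S.bond_self _ x.1)
  bond_comp i j l hij hjl := MonoidHom.ext fun x => Subtype.ext (S.bond_bond hij hjl x.1)

variable {S T}

theorem lim1Rel_one_of_injective (hinj : Function.Injective (lim1Map S T f hcomm)) {a : ∀ i, G i}
    (h : T.lim1Rel (fun i => f i (a i)) 1) : S.lim1Rel a 1 := by
  refine S.lim1_mk_eq_mk_iff.mp (hinj ((T.lim1_mk_eq_mk_iff.mpr h).trans ?_))
  exact congrArg (Quot.mk _) (funext fun i => (map_one (f i)).symm)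

theorem kerSeq_lim1Rel_one (hsurj : Function.Surjective (limMap S T f hcomm))
    (hinj : Function.Injective (lim1Map S T f hcomm)) (a : ∀ i, (f i).ker) :
    (kerSeq S T hcomm).lim1Rel a 1 := by
  have hfa : (fun i => f i (a i : G i)) = 1 := funext fun i => (a i).2
  obtain ⟨x, hx⟩ := S.lim1Rel_one_iff.mp <| lim1Rel_one_of_injective hcomm hinj (a := fun i => a i)
    (by rw [hfa]; exact T.lim1Rel_refl 1)
  have hthread : ∀ i, T.bond (Nat.le_succ i) (f (i + 1) (x (i + 1))) = f i (x i) := fun i => by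
    rw [← hcomm, hx i, map_mul, congrFun hfa i, Pi.one_apply, one_mul]
  obtain ⟨s, hs⟩ := hsurj ⟨fun i => f i (x i), hthread⟩
  have hfs : ∀ i, f i (s.1 i) = f i (x i) := fun i => congrFun (congrArg Subtype.val hs) i
  refine (kerSeq S T hcomm).lim1Rel_one_iff.mpr
    ⟨fun i => ⟨x i * (s.1 i)⁻¹, by rw [MonoidHom.mem_ker, map_mul, map_inv, hfs, mul_inv_cancel]⟩,
      fun i => Subtype.ext ?_⟩
  change x i * (s.1 i)⁻¹ = (a i : G i) * S.bond _ (x (i + 1) * (s.1 (i + 1))⁻¹)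
  rw [map_mul, map_inv, s.2 i, hx i, mul_assoc]

theorem exists_bond_eq_one_of_map_eq_one [∀ i, Countable (G i)]
    (hinj : Function.Injective (limMap S T f hcomm))
    (hsurj : Function.Surjective (limMap S T f hcomm))
    (hinj1 : Function.Injective (lim1Map S T f hcomm)) (i : ℕ) :
    ∃ j, ∃ h : i ≤ j, ∀ x : G j, f j x = 1 → S.bond h x = 1 := by
  have hM : (kerSeq S T hcomm).BondStable fun _ => ⊥ := fun i j h x hx => by
    rw [Subgroup.mem_bot] at hx ⊢; rw [hx, map_one]
  obtain ⟨j, h, hj⟩ := exists_isThreadModulo hM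
    (fun a => ⟨1, fun _ => one_mem _, kerSeq_lim1Rel_one hcomm hsurj hinj1 a⟩) i
  refine ⟨j, h, fun x hx => ?_⟩
  obtain ⟨t, ht, m, hm, hti⟩ := hj ⟨x, hx⟩
  have hthread : ∀ l, S.bond (Nat.le_succ l) (t (l + 1)).1 = (t l).1 := fun l => by
    obtain ⟨μ, hμ, hbond⟩ := ht l
    rw [Subgroup.mem_bot.mp hμ, one_mul] at hbond
    exact congrArg Subtype.val hbond
  have htriv : limMap S T f hcomm ⟨fun l => (t l).1, hthread⟩ =
      limMap S T f hcomm ⟨1, fun l => map_one _⟩ :=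
    Subtype.ext (funext fun l => (t l).2.trans (map_one _).symm)
  rw [Subgroup.mem_bot.mp hm, one_mul] at hti
  exact (congrArg Subtype.val hti).symm.trans (congrFun (congrArg Subtype.val (hinj htriv)) i)

theorem mem_range_of_isThreadModulo (hsurj : Function.Surjective (limMap S T f hcomm))
    (hinj1 : Function.Injective (lim1Map S T f hcomm)) {t : ∀ i, H i}
    (ht : T.IsThreadModulo (fun i => (f i).range) t) (i : ℕ) : t i ∈ (f i).range := by
  choose μ hμ hbond using ht
  choose a ha using hμ
  obtain ⟨x, hx⟩ := S.lim1Rel_one_iff.mp <| lim1Rel_one_of_injective hcomm hinj1 (a := a⁻¹) <|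
    T.lim1Rel_one_iff.mpr ⟨t, fun i => by rw [Pi.inv_apply, map_inv, ha, hbond, inv_mul_cancel_left]⟩
  have hthread : ∀ i, T.bond (Nat.le_succ i) ((f (i + 1) (x (i + 1)))⁻¹ * t (i + 1)) =
      (f i (x i))⁻¹ * t i := fun i => by
    rw [map_mul, map_inv, hbond, ← hcomm, hx i, map_mul, Pi.inv_apply, map_inv, ha]
    group
  obtain ⟨b, hb⟩ := hsurj ⟨fun i => (f i (x i))⁻¹ * t i, hthread⟩
  refine ⟨x i * b.1 i, ?_⟩
  rw [map_mul, show f i (b.1 i) = _ from congrFun (congrArg Subtype.val hb) i, mul_inv_cancel_left]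

theorem exists_bond_mem_range [∀ i, Countable (H i)]
    (hsurj : Function.Surjective (limMap S T f hcomm))
    (hinj1 : Function.Injective (lim1Map S T f hcomm))
    (hsurj1 : Function.Surjective (lim1Map S T f hcomm)) (i : ℕ) :
    ∃ j, ∃ h : i ≤ j, ∀ y : H j, T.bond h y ∈ (f i).range := by
  have hM : T.BondStable fun i => (f i).range := by
    rintro i j h _ ⟨w, rfl⟩
    exact ⟨S.bond h w, map_bond S T hcomm h w⟩
  have hred : T.Lim1RepresentedIn fun i => (f i).range := fun g => by
    obtain ⟨q, hq⟩ := hsurj1 (Quot.mk _ g)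
    obtain ⟨a, rfl⟩ := Quot.exists_rep q
    exact ⟨_, fun i => ⟨a i, rfl⟩, T.lim1Rel_symm (T.lim1_mk_eq_mk_iff.mp hq)⟩
  obtain ⟨j, h, hj⟩ := exists_isThreadModulo hM hred i
  refine ⟨j, h, fun y => ?_⟩
  obtain ⟨t, ht, m, hm, hti⟩ := hj y
  rw [← inv_mul_cancel_left m (T.bond h y), ← hti]
  exact mul_mem (inv_mem hm) (mem_range_of_isThreadModulo hcomm hsurj hinj1 ht i)

include hcomm in
theorem exists_inv_of_ker_of_range {κ m κ' : ℕ} (h₁ : κ ≤ m) (h₂ : m ≤ κ')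
    (hker : ∀ x : G m, f m x = 1 → S.bond h₁ x = 1)
    (hrange : ∀ y : H κ', T.bond h₂ y ∈ (f m).range) :
    ∃ g : H κ' →* G κ, g.comp (f κ') = S.bond (h₁.trans h₂) ∧
      (f κ).comp g = T.bond (h₁.trans h₂) := by
  choose lift hlift using hrange
  have hbond_eq : ∀ u v : G m, f m u = f m v → S.bond h₁ u = S.bond h₁ v := fun u v huv => by
    rw [← mul_inv_eq_one, ← map_inv, ← map_mul]
    exact hker _ (by rw [map_mul, map_inv, huv, mul_inv_cancel])
  refine ⟨MonoidHom.mk' (fun y => S.bond h₁ (lift y)) fun y₁ y₂ => ?_, ?_, ?_⟩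
  · rw [← map_mul]
    exact hbond_eq _ _ (by rw [hlift, map_mul, map_mul, hlift, hlift])
  · refine MonoidHom.ext fun x => ?_
    rw [MonoidHom.comp_apply, MonoidHom.mk'_apply, ← S.bond_bond h₁ h₂]
    exact hbond_eq _ _ (by rw [hlift, map_bond S T hcomm])
  · refine MonoidHom.ext fun y => ?_
    rw [MonoidHom.comp_apply, MonoidHom.mk'_apply, map_bond S T hcomm, hlift, T.bond_bond]

variable (f) in
noncomputable def ProInverse.ofExists
    (hex : ∀ κ, ∃ κ', ∃ h : κ < κ', ∃ g : H κ' →* G κ,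
      g.comp (f κ') = S.bond h.le ∧ (f κ).comp g = T.bond h.le) :
    ProInverse S T f := by
  choose next hlt g hgf hfg using hex
  let k : ℕ → ℕ := fun n => Nat.rec 0 (fun _ κ => next κ) n
  exact ⟨k, strictMono_nat_of_lt_succ fun n => hlt (k n), fun i => g (k i), fun i => hgf (k i),
    fun i => hfg (k i)⟩

noncomputable def ProInverse.ofBijective [∀ i, Countable (G i)] [∀ i, Countable (H i)]
    (hlim : Function.Bijective (limMap S T f hcomm))
    (hlim1 : Function.Bijective (lim1Map S T f hcomm)) : ProInverse S T f :=
  ProInverse.ofExists f fun κ => by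
    obtain ⟨m, h₁, hker⟩ := exists_bond_eq_one_of_map_eq_one hcomm hlim.1 hlim.2 hlim1.1 κ
    obtain ⟨j, h₂, hrange⟩ := exists_bond_mem_range hcomm hlim.2 hlim1.1 hlim1.2 m
    obtain ⟨g, hg⟩ := exists_inv_of_ker_of_range hcomm h₁ (h₂.trans (le_max_left j (κ + 1))) hker
      fun y => by rw [← T.bond_bond h₂ (le_max_left j (κ + 1))]; exact hrange _
    exact ⟨max j (κ + 1), by omega, g, hg⟩

end Backward

end GroupInvSeq

open GroupInvSeq in
theorem proIso_iff_lim_and_lim1_bijective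
    {G H : ℕ → Type} [∀ i, Group (G i)] [∀ i, Group (H i)]
    [∀ i, Countable (G i)] [∀ i, Countable (H i)]
    (S : GroupInvSeq G) (T : GroupInvSeq H) (f : ∀ i, G i →* H i)
    (hcomm : ∀ i (x : G (i + 1)),
      f i (S.bond (Nat.le_succ i) x) = T.bond (Nat.le_succ i) (f (i + 1) x)) :
    (∃ k : ℕ → ℕ, ∃ hk : StrictMono k, ∃ g : ∀ i, H (k (i + 1)) →* G (k i),
        (∀ i, (g i).comp (f (k (i + 1))) = S.bond (hk.monotone (Nat.le_succ i))) ∧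
        (∀ i, (f (k i)).comp (g i) = T.bond (hk.monotone (Nat.le_succ i)))) ↔
      (Function.Bijective (limMap S T f hcomm) ∧
        Function.Bijective (lim1Map S T f hcomm)) := by
  constructor
  · rintro ⟨k, hk, g, hgf, hfg⟩
    let e : ProInverse S T f := ⟨k, hk, g, hgf, hfg⟩
    exact ⟨e.bijective_limMap hcomm, e.bijective_lim1Map hcomm⟩
  · rintro ⟨hlim, hlim1⟩
    let e := ProInverse.ofBijective hcomm hlim hlim1
    exact ⟨e.k, e.strictMono, e.inv, e.inv_comp, e.comp_inv⟩
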